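/- arXiv:2308.14554 — 3 statements merged into one kernel-verified Lean document; each statement's English description precedes it below -/
import Mathlib

section
/- Let d be a positive integer and let G be a countable graph with all vertex degrees at most d. If G is fractionally almost finite, then G has Følner Property A. -/
open scoped ENNReal
open MeasureTheory

namespace AFPaper

variable {V : Type*} {W : Type*}

/-- The ball of radius `r` around `x` in the graph `G`. -/
def gball (G : SimpleGraph V) (x : V) (r : ℕ) : Set V :=
  {y | G.Reachable x y ∧ G.dist x y ≤ r}

/-- All vertex degrees of `G` are at most `d`. -/
def DegLE (G : SimpleGraph V) (d : ℕ) : Prop :=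
  ∀ v : V, (G.neighborSet v).Finite ∧ (G.neighborSet v).ncard ≤ d

/-- The boundary of `F` inside the induced subgraph on the ambient set `L`:
vertices of `F` adjacent (in `G`) to some vertex of `L` outside `F`. -/
def boundaryIn (G : SimpleGraph V) (L F : Set V) : Set V :=
  {x ∈ F | ∃ y ∈ L \ F, G.Adj x y}

/-- The boundary of `F` in `G`. -/
def boundary (G : SimpleGraph V) (F : Set V) : Set V :=
  boundaryIn G Set.univ F

/-- `F` is an `ε`-Følner set with respect to the induced subgraph on `L`. -/
def IsFolnerIn (G : SimpleGraph V) (L : Set V) (ε : ℝ) (F : Set V) : Prop :=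
  F.Finite ∧ ((boundaryIn G L F).ncard : ℝ) < ε * (F.ncard : ℝ)

/-- `F` is an `ε`-Følner set in `G`. -/
def IsFolner (G : SimpleGraph V) (ε : ℝ) (F : Set V) : Prop :=
  IsFolnerIn G Set.univ ε F

/-- The set `F` has diameter at most `r` in `G`. -/
def DiamLE (G : SimpleGraph V) (r : ℕ) (F : Set V) : Prop :=
  ∀ x ∈ F, ∀ y ∈ F, G.Reachable x y ∧ G.dist x y ≤ r

/-- The connected component of `x` in the subgraph of `G` induced on `S`. -/
def componentIn (G : SimpleGraph V) (S : Set V) (x : V) : Set V :=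
  {y | ∃ (hx : x ∈ S) (hy : y ∈ S), (G.induce S).Reachable ⟨x, hx⟩ ⟨y, hy⟩}

/-- All connected components of the subgraph induced on `S` have size at most `k`. -/
def SmallComponents (G : SimpleGraph V) (S : Set V) (k : ℕ) : Prop :=
  ∀ x ∈ S, (componentIn G S x).Finite ∧ (componentIn G S x).ncard ≤ k

/-- A witness for Property A with accuracy `ε` and radius `r`. -/
def PropertyAWith (G : SimpleGraph V) (ε : ℝ) (r : ℕ) : Prop :=
  ∃ Θ : V → V → ℝ,
    (∀ x, (Function.support (Θ x)).Finite) ∧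
    (∀ x y, 0 ≤ Θ x y) ∧
    (∀ x, (∑ᶠ y, Θ x y) = 1) ∧
    (∀ x y, Θ x y ≠ 0 → y ∈ gball G x r) ∧
    (∀ x y, G.Adj x y → (∑ᶠ z, |Θ x z - Θ y z|) < ε)

/-- Property A for graphs. -/
def PropertyA (G : SimpleGraph V) : Prop :=
  ∀ ε : ℝ, 0 < ε → ∃ r : ℕ, 1 ≤ r ∧ PropertyAWith G ε r

/-- Uniform local amenability. -/
def UniformlyLocallyAmenable (G : SimpleGraph V) : Prop :=
  ∀ ε : ℝ, 0 < ε → ∃ k : ℕ, 0 < k ∧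
    ∀ L : Set V, L.Finite → L.Nonempty →
      ∃ M : Set V, M ⊆ L ∧ M.Nonempty ∧ M.ncard ≤ k ∧ IsFolnerIn G L ε M

/-- Local hyperfiniteness. -/
def LocallyHyperfinite (G : SimpleGraph V) : Prop :=
  ∀ ε : ℝ, 0 < ε → ∃ k : ℕ, 0 < k ∧
    ∀ L : Set V, L.Finite → L.Nonempty →
      ∃ L' : Set V, L' ⊆ L ∧ ((L'.ncard : ℝ) < ε * (L.ncard : ℝ)) ∧
        SmallComponents G (L \ L') k

/-- Weighted hyperfiniteness. -/
def WeightedHyperfinite (G : SimpleGraph V) : Prop :=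
  ∀ ε : ℝ, 0 < ε → ∃ k : ℕ, 0 < k ∧
    ∀ w : V → ℝ, (Function.support w).Finite → (∀ x, 0 ≤ w x) →
      ∃ L : Set V, (∑ᶠ x ∈ L, w x) ≤ ε * (∑ᶠ x, w x) ∧ SmallComponents G Lᶜ k

/-- `Y` is a `k`-separator: deleting `Y` leaves components of size at most `k`. -/
def IsSeparator (G : SimpleGraph V) (k : ℕ) (Y : Set V) : Prop :=
  SmallComponents G Yᶜ k

/-- The space of `k`-separators, as a subspace of `V → Bool` (product of discrete
spaces); its Borel σ-algebra coincides with the induced product σ-algebra used here. -/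
abbrev SepSpace (G : SimpleGraph V) (k : ℕ) :=
  {f : V → Bool // IsSeparator G k {x | f x = true}}

/-- Strong hyperfiniteness. -/
def StronglyHyperfinite (G : SimpleGraph V) : Prop :=
  ∀ ε : ℝ, 0 < ε → ∃ k : ℕ, 0 < k ∧
    ∃ μ : Measure (SepSpace G k), μ Set.univ = 1 ∧
      ∀ x : V, μ {Y : SepSpace G k | Y.1 x = true} < ENNReal.ofReal ε

/-- An `(ε,r)`-Følner packing, encoded as a partial equivalence relation
`p : V → V → Bool` ("being in the same member of the packing"); the classes are the
members of the packing, and `p x x = false` exactly when `x` is not covered. -/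
structure IsPacking (G : SimpleGraph V) (ε : ℝ) (r : ℕ) (p : V → V → Bool) : Prop where
  symm : ∀ x y, p x y = true → p y x = true
  trans : ∀ x y z, p x y = true → p y z = true → p x z = true
  folner : ∀ x, p x x = true → IsFolner G ε {y | p x y = true}
  diam : ∀ x, p x x = true → DiamLE G r {y | p x y = true}

/-- The space of `(ε,r)`-packings of `G`, as a subspace of `V → V → Bool`. -/
abbrev PackingSpace (G : SimpleGraph V) (ε : ℝ) (r : ℕ) :=
  {p : V → V → Bool // IsPacking G ε r p}

/-- Strong Følner hyperfiniteness. -/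
def StronglyFolnerHyperfinite (G : SimpleGraph V) : Prop :=
  ∀ ε : ℝ, 0 < ε → ∃ r : ℕ, 1 ≤ r ∧
    ∃ ν : Measure (PackingSpace G ε r), ν Set.univ = 1 ∧
      ∀ x : V, ENNReal.ofReal (1 - ε) < ν {P : PackingSpace G ε r | P.1 x x = true}

/-- A packing is a tiling when it covers every vertex. -/
def IsTiling (p : V → V → Bool) : Prop := ∀ x, p x x = true

/-- Strong almost finiteness. -/
def StronglyAlmostFinite (G : SimpleGraph V) : Prop :=
  ∀ ε : ℝ, 0 < ε → ∃ r : ℕ, 1 ≤ r ∧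
    ∃ ν : Measure (PackingSpace G ε r), ν Set.univ = 1 ∧
      ν {P : PackingSpace G ε r | IsTiling P.1} = 1 ∧
      ∀ x : V, ν {P : PackingSpace G ε r | x ∈ boundary G {y | P.1 x y = true}} <
        ENNReal.ofReal ε

/-- Almost finiteness: `V(G)` can be tiled by `ε`-Følner sets of diameter at most `r`. -/
def AlmostFinite (G : SimpleGraph V) : Prop :=
  ∀ ε : ℝ, 0 < ε → ∃ r : ℕ, ∃ T : Set (Set V),
    (∀ F ∈ T, IsFolner G ε F ∧ DiamLE G r F) ∧
    T.PairwiseDisjoint id ∧ ⋃₀ T = Set.univ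

/-- Uniform amenability. -/
def UniformlyAmenable (G : SimpleGraph V) : Prop :=
  ∀ ε : ℝ, 0 < ε → ∃ r : ℕ, ∀ x : V, ∃ F : Set V, F ⊆ gball G x r ∧ IsFolner G ε F

/-- The `r`-neighborhood of a set `L`. -/
def setBall (G : SimpleGraph V) (L : Set V) (r : ℕ) : Set V :=
  ⋃ x ∈ L, gball G x r

/-- The uniform Følner property. -/
def UniformlyFolner (G : SimpleGraph V) : Prop :=
  ∀ ε : ℝ, 0 < ε → ∃ r : ℕ, 1 < r ∧
    ∀ L : Set V, L.Finite → L.Nonempty →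
      ∃ H : Set V, L ⊆ H ∧ H ⊆ setBall G L r ∧ IsFolner G ε H

/-- The Følner sum `Σ_x Σ_{y ∼ x} |f(x) − f(y)|`. -/
noncomputable def FolnerSum (G : SimpleGraph V) (f : V → ℝ) : ℝ :=
  ∑ᶠ x, ∑ᶠ y ∈ G.neighborSet x, |f x - f y|

/-- `f` is an `ε`-Følner function. -/
def IsFolnerFun (G : SimpleGraph V) (ε : ℝ) (f : V → ℝ) : Prop :=
  (Function.support f).Finite ∧ (∀ x, 0 ≤ f x) ∧ f ≠ 0 ∧
    FolnerSum G f < ε * (∑ᶠ x, f x)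

/-- `f` is an `ε`-Følner probability measure. -/
def IsFolnerProb (G : SimpleGraph V) (ε : ℝ) (f : V → ℝ) : Prop :=
  IsFolnerFun G ε f ∧ (∑ᶠ x, f x) = 1

/-- Følner Property A. -/
def FolnerPropertyA (G : SimpleGraph V) : Prop :=
  ∀ ε : ℝ, 0 < ε → ∃ r : ℕ, 1 ≤ r ∧
    ∃ Θ : V → V → ℝ,
      (∀ x, IsFolnerProb G ε (Θ x)) ∧
      (∀ x y, Θ x y ≠ 0 → y ∈ gball G x r) ∧
      (∀ x y, G.Adj x y → (∑ᶠ z, |Θ x z - Θ y z|) < ε)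

/-- The collection of `ε`-Følner sets of diameter at most `r`. -/
def FolnerSets (G : SimpleGraph V) (ε : ℝ) (r : ℕ) : Set (Set V) :=
  {H | IsFolner G ε H ∧ DiamLE G r H}

/-- Fractional almost finiteness. -/
def FractionallyAlmostFinite (G : SimpleGraph V) : Prop :=
  ∀ ε : ℝ, 0 < ε → ∃ r : ℕ, 1 ≤ r ∧
    ∃ F : Set V → ℝ,
      (∀ H ∈ FolnerSets G ε r, 0 ≤ F H) ∧
      (∀ x : V, ∃ c : ℝ, 0 ≤ c ∧ c < ε ∧
        (∑ᶠ H ∈ {H ∈ FolnerSets G ε r | x ∈ H}, F H) = 1 - c) ∧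
      (∀ x : V, (∑ᶠ H ∈ {H ∈ FolnerSets G ε r | x ∈ boundary G H}, F H) < ε)

/-- Subexponential growth: `lim_{r→∞} sup_x log|B_r(x)|/r = 0`. -/
def SubexpGrowth (G : SimpleGraph V) : Prop :=
  ∀ ε : ℝ, 0 < ε → ∃ R : ℕ, ∀ r : ℕ, R ≤ r → ∀ x : V,
    Real.log ((gball G x r).ncard : ℝ) < ε * (r : ℝ)

/-- The rooted `r`-ball of `G` at `v` is rooted-isomorphic to the rooted `r`-ball of
`H` at `w`. -/
def BallIso (G : SimpleGraph V) (v : V) (H : SimpleGraph W) (w : W) (r : ℕ) : Prop :=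
  ∃ (hv : v ∈ gball G v r) (hw : w ∈ gball H w r)
    (φ : ↥(gball G v r) ≃ ↥(gball H w r)),
      φ ⟨v, hv⟩ = ⟨w, hw⟩ ∧
      ∀ a b : ↥(gball G v r), G.Adj ↑a ↑b ↔ H.Adj ↑(φ a) ↑(φ b)

/-- Neighborhood equivalence of graphs. -/
def NeighborhoodEquiv (G : SimpleGraph V) (H : SimpleGraph W) : Prop :=
  (∀ (r : ℕ) (v : V), ∃ w : W, BallIso G v H w r) ∧
  (∀ (r : ℕ) (w : W), ∃ v : V, BallIso H w G v r)

end AFPaper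

namespace AFPaper

section FPAAux

open Set Function

open scoped Classical

variable {V : Type} {G : SimpleGraph V} {d : ℕ}

lemma afp_gball_finite (hdeg : DegLE G d) (x : V) : ∀ r : ℕ, (gball G x r).Finite := by
  intro r
  induction r with
  | zero =>
    apply Set.Finite.subset (Set.finite_singleton x)
    rintro y ⟨hreach, hdist⟩
    have h0 : G.dist x y = 0 := Nat.le_zero.mp hdist
    rcases SimpleGraph.dist_eq_zero_iff_eq_or_not_reachable.mp h0 with h | h
    · exact h.symm ▸ Set.mem_singleton _
    · exact absurd hreach h
  | succ r ih =>
    apply Set.Finite.subset (ih.union (Set.Finite.biUnion ih (fun z _ => (hdeg z).1)))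
    rintro y ⟨hreach, hdist⟩
    by_cases hy : G.dist x y ≤ r
    · exact Or.inl ⟨hreach, hy⟩
    · right
      obtain ⟨w, hw⟩ := hreach.symm.exists_walk_length_eq_dist
      cases w with
      | nil =>
        exfalso
        simp only [SimpleGraph.Walk.length_nil] at hw
        rw [SimpleGraph.dist_comm] at hw
        omega
      | @cons _ z _ h p =>
        have hlen : p.length + 1 = G.dist y x := by simpa using hw
        have hple : p.length ≤ r := by
          rw [SimpleGraph.dist_comm] at hdist; omega
        have hz1 : G.Reachable x z := p.reverse.reachable
        have hz2 : G.dist x z ≤ r :=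
          le_trans (by simpa using SimpleGraph.dist_le p.reverse) hple
        refine Set.mem_biUnion (show z ∈ gball G x r from ⟨hz1, hz2⟩) ?_
        exact h.symm

lemma afp_boundary_subset (H : Set V) : boundary G H ⊆ H := fun x hx => hx.1

lemma afp_folnerSum_eq (hdeg : DegLE G d) (f : V → ℝ) (U : Finset V)
    (hU : ∀ u, f u ≠ 0 → u ∈ U) (hU2 : ∀ u v, f u ≠ 0 → G.Adj u v → v ∈ U) :
    FolnerSum G f = ∑ u ∈ U, ∑ v ∈ (hdeg u).1.toFinset, |f u - f v| := by
  have hinner : ∀ u : V, (∑ᶠ v ∈ G.neighborSet u, |f u - f v|)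
      = ∑ v ∈ (hdeg u).1.toFinset, |f u - f v| := by
    intro u
    have h := (Set.Finite.coe_toFinset (hdeg u).1).symm
    exact (finsum_mem_congr h fun v _ => rfl).trans (finsum_mem_coe_finset _ _)
  unfold FolnerSum
  rw [finsum_eq_sum_of_support_subset _ (s := U)]
  · exact Finset.sum_congr rfl fun u _ => hinner u
  · intro u hu
    simp only [Function.mem_support, hinner u] at hu
    have : ∃ v ∈ (hdeg u).1.toFinset, |f u - f v| ≠ 0 := by
      by_contra hcon
      push_neg at hcon
      exact hu (Finset.sum_eq_zero fun v hv => by simpa using hcon v hv)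
    obtain ⟨v, hv, hne⟩ := this
    rcases eq_or_ne (f u) 0 with h0 | h0
    · have hfv : f v ≠ 0 := by
        intro h
        rw [h0, h] at hne; simp at hne
      have hadj : G.Adj u v := (hdeg u).1.mem_toFinset.mp hv
      exact hU2 v u hfv hadj.symm
    · exact hU u h0

lemma afp_sum_ite_one (H : Set V) (hH : H.Finite) (hne : H.Nonempty) (W : Finset V)
    (hsub : ∀ z ∈ H, z ∈ W) :
    ∑ z ∈ W, (if z ∈ H then ((H.ncard : ℝ))⁻¹ else 0) = 1 := by
  classical
  rw [← Finset.sum_filter]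
  have hfil : W.filter (· ∈ H) = hH.toFinset := by
    ext z
    simp only [Finset.mem_filter, Set.Finite.mem_toFinset]
    exact ⟨fun h => h.2, fun h => ⟨hsub z h, h⟩⟩
  rw [hfil, Finset.sum_const, nsmul_eq_mul]
  have hcard : hH.toFinset.card = H.ncard := (Set.ncard_eq_toFinset_card _ hH).symm
  rw [hcard]
  have hpos : 0 < H.ncard := (Set.ncard_pos hH).mpr hne
  field_simp

lemma afp_E_bound (hd : 0 < d) (hdeg : DegLE G d) (H : Set V) (hH : H.Finite) (U : Finset V)
    (hbU : ∀ z ∈ boundary G H, z ∈ U) :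
    ∑ u ∈ U, ∑ v ∈ (hdeg u).1.toFinset,
        |(if u ∈ H then ((H.ncard : ℝ))⁻¹ else 0) - (if v ∈ H then ((H.ncard : ℝ))⁻¹ else 0)|
      ≤ (H.ncard : ℝ)⁻¹ * (2 * d * (boundary G H).ncard) := by
  classical
  have hbfin : (boundary G H).Finite := hH.subset (afp_boundary_subset H)
  set ind : V → ℝ := fun w => if w ∈ boundary G H then 1 else 0 with hind
  have hinv0 : (0:ℝ) ≤ (H.ncard : ℝ)⁻¹ := by positivity
  have hind0 : ∀ w, 0 ≤ ind w := by
    intro w; simp only [hind]; split <;> norm_num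
  -- pointwise bound
  have hpt : ∀ u, ∀ v ∈ (hdeg u).1.toFinset,
      |(if u ∈ H then ((H.ncard : ℝ))⁻¹ else 0) - (if v ∈ H then ((H.ncard : ℝ))⁻¹ else 0)|
        ≤ (H.ncard : ℝ)⁻¹ * (ind u + ind v) := by
    intro u v hv
    have hadj : G.Adj u v := (hdeg u).1.mem_toFinset.mp hv
    by_cases hu : u ∈ H <;> by_cases hvH : v ∈ H
    · simp only [hu, hvH, if_pos]
      rw [sub_self, abs_zero]
      positivity
    · have hub : u ∈ boundary G H :=
        ⟨hu, v, ⟨Set.mem_univ v, hvH⟩, hadj⟩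
      simp only [hu, hvH, if_pos, if_neg, hind, hub, not_false_iff, sub_zero]
      rw [abs_of_nonneg hinv0]
      nlinarith [hind0 v]
    · have hvb : v ∈ boundary G H :=
        ⟨hvH, u, ⟨Set.mem_univ u, hu⟩, hadj.symm⟩
      simp only [hu, hvH, if_pos, if_neg, hind, hvb, not_false_iff, zero_sub, abs_neg]
      rw [abs_of_nonneg hinv0]
      nlinarith [hind0 u]
    · simp only [hu, hvH, if_neg, not_false_iff, sub_self, abs_zero]
      positivity
  have hsum1 : ∀ (W : Finset V), ∑ w ∈ W, ind w ≤ ((boundary G H).ncard : ℝ) := by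
    intro W
    have heq : ∑ w ∈ W, ind w = ∑ w ∈ W.filter (· ∈ boundary G H), (1:ℝ) := by
      rw [Finset.sum_filter]
    rw [heq]
    simp only [Finset.sum_const, nsmul_eq_mul, mul_one]
    rw [Set.ncard_eq_toFinset_card _ hbfin]
    have : W.filter (· ∈ boundary G H) ⊆ hbfin.toFinset := by
      intro z hz
      rw [Set.Finite.mem_toFinset]
      exact (Finset.mem_filter.mp hz).2
    exact_mod_cast Nat.cast_le.mpr (Finset.card_le_card this)
  have hTcard : ∀ u : V, ((hdeg u).1.toFinset.card : ℝ) ≤ d := by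
    intro u
    have := (hdeg u).2
    rw [Set.ncard_eq_toFinset_card _ (hdeg u).1] at this
    exact_mod_cast this
  calc ∑ u ∈ U, ∑ v ∈ (hdeg u).1.toFinset,
        |(if u ∈ H then ((H.ncard : ℝ))⁻¹ else 0) - (if v ∈ H then ((H.ncard : ℝ))⁻¹ else 0)|
      ≤ ∑ u ∈ U, ∑ v ∈ (hdeg u).1.toFinset, (H.ncard : ℝ)⁻¹ * (ind u + ind v) :=
        Finset.sum_le_sum fun u _ => Finset.sum_le_sum fun v hv => hpt u v hv
    _ = (H.ncard : ℝ)⁻¹ * ((∑ u ∈ U, ∑ v ∈ (hdeg u).1.toFinset, ind u)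
          + ∑ u ∈ U, ∑ v ∈ (hdeg u).1.toFinset, ind v) := by
        rw [← Finset.sum_add_distrib, Finset.mul_sum]
        refine Finset.sum_congr rfl fun u _ => ?_
        rw [← Finset.sum_add_distrib, Finset.mul_sum]
    _ ≤ (H.ncard : ℝ)⁻¹ * (d * (boundary G H).ncard + d * (boundary G H).ncard) := by
        have hA : (∑ u ∈ U, ∑ v ∈ (hdeg u).1.toFinset, ind u)
            ≤ (d : ℝ) * (boundary G H).ncard := by
          calc ∑ u ∈ U, ∑ _v ∈ (hdeg u).1.toFinset, ind u
              = ∑ u ∈ U, ((hdeg u).1.toFinset.card : ℝ) * ind u := by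
                refine Finset.sum_congr rfl fun u _ => ?_
                rw [Finset.sum_const, nsmul_eq_mul]
            _ ≤ ∑ u ∈ U, (d : ℝ) * ind u :=
                Finset.sum_le_sum fun u _ =>
                  mul_le_mul_of_nonneg_right (hTcard u) (hind0 u)
            _ = (d : ℝ) * ∑ u ∈ U, ind u := by rw [Finset.mul_sum]
            _ ≤ (d : ℝ) * (boundary G H).ncard :=
                mul_le_mul_of_nonneg_left (hsum1 U) (by positivity)
        have hB : (∑ u ∈ U, ∑ v ∈ (hdeg u).1.toFinset, ind v)
            ≤ (d : ℝ) * (boundary G H).ncard := by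
          have hstep : ∀ u : V, ∑ v ∈ (hdeg u).1.toFinset, ind v
              = ∑ v ∈ U, if v ∈ (hdeg u).1.toFinset then ind v else 0 := by
            intro u
            rw [Finset.sum_ite_mem]
            refine (Finset.sum_subset (Finset.inter_subset_right) ?_).symm
            intro v hv hnv
            have hvU : v ∉ U := fun h => hnv (Finset.mem_inter.mpr ⟨h, hv⟩)
            simp only [hind]
            rw [if_neg]
            intro hb
            exact hvU (hbU v hb)
          calc ∑ u ∈ U, ∑ v ∈ (hdeg u).1.toFinset, ind v
              = ∑ u ∈ U, ∑ v ∈ U, if v ∈ (hdeg u).1.toFinset then ind v else 0 :=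
                Finset.sum_congr rfl fun u _ => hstep u
            _ = ∑ v ∈ U, ∑ u ∈ U, if v ∈ (hdeg u).1.toFinset then ind v else 0 :=
                Finset.sum_comm
            _ ≤ ∑ v ∈ U, (d : ℝ) * ind v := by
                refine Finset.sum_le_sum fun v _ => ?_
                rw [← Finset.sum_filter, Finset.sum_const, nsmul_eq_mul]
                have hsub : U.filter (fun u => v ∈ (hdeg u).1.toFinset) ⊆
                    (hdeg v).1.toFinset := by
                  intro u hu
                  have : G.Adj u v := (hdeg u).1.mem_toFinset.mp (Finset.mem_filter.mp hu).2
                  exact (hdeg v).1.mem_toFinset.mpr this.symm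
                have hcard : ((U.filter (fun u => v ∈ (hdeg u).1.toFinset)).card : ℝ) ≤ d :=
                  le_trans (by exact_mod_cast Nat.cast_le.mpr (Finset.card_le_card hsub))
                    (hTcard v)
                exact mul_le_mul_of_nonneg_right hcard (hind0 v)
            _ = (d : ℝ) * ∑ v ∈ U, ind v := by rw [Finset.mul_sum]
            _ ≤ (d : ℝ) * (boundary G H).ncard :=
                mul_le_mul_of_nonneg_left (hsum1 U) (by positivity)
        have := add_le_add hA hB
        exact mul_le_mul_of_nonneg_left this hinv0
    _ = (H.ncard : ℝ)⁻¹ * (2 * d * (boundary G H).ncard) := by ring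

lemma afp_triple_swap {ι : Type*} {κ : Type*} (U : Finset ι) (T : ι → Finset ι) (C : Finset κ)
    (a : κ → ℝ) (g : κ → ι → ι → ℝ) (cst : ℝ) :
    (∑ u ∈ U, ∑ v ∈ T u, (cst * ∑ H ∈ C, a H * g H u v))
      = cst * ∑ H ∈ C, a H * (∑ u ∈ U, ∑ v ∈ T u, g H u v) := by
  have h1 : ∀ u, (∑ v ∈ T u, (cst * ∑ H ∈ C, a H * g H u v))
      = cst * ∑ H ∈ C, a H * ∑ v ∈ T u, g H u v := by
    intro u
    rw [← Finset.mul_sum]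
    congr 1
    rw [Finset.sum_comm]
    exact Finset.sum_congr rfl fun H _ => (Finset.mul_sum _ _ _).symm
  rw [Finset.sum_congr rfl fun u _ => h1 u, ← Finset.mul_sum]
  congr 1
  rw [Finset.sum_comm]
  exact Finset.sum_congr rfl fun H _ => (Finset.mul_sum _ _ _).symm

end FPAAux

set_option maxHeartbeats 1600000 in
/-- Fractional almost finiteness implies Følner Property A. -/
theorem fractionallyAlmostFinite_implies_folnerPropertyA
    (d : ℕ) (hd : 0 < d) {V : Type} [Countable V]
    (G : SimpleGraph V) (hdeg : DegLE G d)
    (hFAF : FractionallyAlmostFinite G) :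
    FolnerPropertyA G := by
  classical
  intro ε hε
  set m : ℝ := min ε 1 with hm
  have hm0 : 0 < m := lt_min hε one_pos
  have hmε : m ≤ ε := min_le_left _ _
  have hm1 : m ≤ 1 := min_le_right _ _
  have hDpos : (0:ℝ) < 16 * ((d:ℝ) + 1) := by positivity
  set δ : ℝ := m / (16 * ((d:ℝ) + 1)) with hδdef
  have hδ0 : 0 < δ := div_pos hm0 hDpos
  have hd0 : (0:ℝ) ≤ (d:ℝ) := Nat.cast_nonneg d
  have heq : δ * (16 * ((d:ℝ) + 1)) = m := by
    rw [hδdef]; field_simp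
  have hdδ0 : 0 ≤ (d:ℝ) * δ := mul_nonneg hd0 hδ0.le
  have hδ16 : δ ≤ 1/16 := by nlinarith
  have h8δ : 8 * δ < ε := by nlinarith
  have h2dδ : 2 * (d:ℝ) * δ < ε := by nlinarith
  obtain ⟨r, hr1, F, hF0, hF1, hF2⟩ := hFAF δ hδ0
  refine ⟨r, hr1, ?_⟩
  -- finiteness of balls
  have hball : ∀ (x : V) (k : ℕ), (gball G x k).Finite := fun x k => afp_gball_finite hdeg x k
  have hHsub : ∀ (x : V) (H : Set V), H ∈ FolnerSets G δ r → x ∈ H → H ⊆ gball G x r := by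
    intro x H hH hx y hy
    exact hH.2 x hx y hy
  have hSfin : ∀ x : V, ({H ∈ FolnerSets G δ r | x ∈ H} : Set (Set V)).Finite := by
    intro x
    apply ((hball x r).finite_subsets).subset
    rintro H ⟨hH, hx⟩
    exact hHsub x H hH hx
  have hBfin : ∀ x : V, ({H ∈ FolnerSets G δ r | x ∈ boundary G H} : Set (Set V)).Finite := by
    intro x
    apply ((hball x r).finite_subsets).subset
    rintro H ⟨hH, hx⟩
    exact hHsub x H hH (afp_boundary_subset H hx)
  set A : V → Finset (Set V) := fun x => (hSfin x).toFinset with hA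
  have hmemA : ∀ x H, H ∈ A x ↔ (H ∈ FolnerSets G δ r ∧ x ∈ H) := by
    intro x H
    rw [hA]
    exact (hSfin x).mem_toFinset
  set Bf : V → Finset (Set V) := fun x => (hBfin x).toFinset with hBf
  have hmemB : ∀ x H, H ∈ Bf x ↔ (H ∈ FolnerSets G δ r ∧ x ∈ boundary G H) := by
    intro x H
    rw [hBf]
    exact (hBfin x).mem_toFinset
  set c : V → ℝ := fun x => (hF1 x).choose with hcdef
  have hc : ∀ x, 0 ≤ c x ∧ c x < δ ∧
      (∑ᶠ H ∈ ({H ∈ FolnerSets G δ r | x ∈ H} : Set (Set V)), F H) = 1 - c x := by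
    intro x
    obtain ⟨h1, h2, h3⟩ := (hF1 x).choose_spec
    exact ⟨h1, h2, h3⟩
  set sf : V → ℝ := fun x => 1 - c x with hsfdef
  have hsumA : ∀ x : V, ∑ H ∈ A x, F H = sf x := by
    intro x
    have h3 := (hc x).2.2
    have hcoe : ({H ∈ FolnerSets G δ r | x ∈ H} : Set (Set V)) = ↑(A x) :=
      (Set.Finite.coe_toFinset (hSfin x)).symm
    rw [(finsum_mem_congr hcoe fun H _ => rfl).trans (finsum_mem_coe_finset _ _)] at h3
    exact h3
  have hsumB : ∀ x : V, ∑ H ∈ Bf x, F H < δ := by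
    intro x
    have h3 := hF2 x
    have hcoe : ({H ∈ FolnerSets G δ r | x ∈ boundary G H} : Set (Set V)) = ↑(Bf x) :=
      (Set.Finite.coe_toFinset (hBfin x)).symm
    rwa [(finsum_mem_congr hcoe fun H _ => rfl).trans (finsum_mem_coe_finset _ _)] at h3
  have hs_half : ∀ x, 1/2 ≤ sf x := by
    intro x
    have := (hc x).2.1
    have := (hc x).1
    simp only [hsfdef]
    linarith
  have hs_pos : ∀ x, 0 < sf x := fun x => lt_of_lt_of_le (by norm_num) (hs_half x)
  have hs_le1 : ∀ x, sf x ≤ 1 := by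
    intro x
    have := (hc x).1
    simp only [hsfdef]
    linarith
  have hsinv_nonneg : ∀ x, 0 ≤ (sf x)⁻¹ := fun x => inv_nonneg.mpr (hs_pos x).le
  have hsinv_le2 : ∀ x, (sf x)⁻¹ ≤ 2 := by
    intro x
    have hp := hs_pos x
    have h1 : sf x * (sf x)⁻¹ = 1 := mul_inv_cancel₀ (ne_of_gt hp)
    have h2 : 0 ≤ (sf x - 1/2) * (sf x)⁻¹ :=
      mul_nonneg (by linarith [hs_half x]) (hsinv_nonneg x)
    nlinarith
  -- facts about members of A x
  have hAfacts : ∀ x H, H ∈ A x → H.Finite ∧ x ∈ H ∧ H ⊆ gball G x r ∧ 0 < H.ncard ∧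
      ((boundary G H).ncard : ℝ) < δ * (H.ncard : ℝ) := by
    intro x H hH
    obtain ⟨hHF, hx⟩ := (hmemA x H).mp hH
    have hfin : H.Finite := hHF.1.1
    refine ⟨hfin, hx, hHsub x H hHF hx, (Set.ncard_pos hfin).mpr ⟨x, hx⟩, hHF.1.2⟩
  have hFA : ∀ x H, H ∈ A x → 0 ≤ F H := fun x H hH => hF0 H ((hmemA x H).mp hH).1
  -- the map Θ
  set Θ : V → V → ℝ := fun x z =>
    (sf x)⁻¹ * ∑ H ∈ A x, F H * (if z ∈ H then ((H.ncard : ℝ))⁻¹ else 0) with hΘ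
  have hΘnonneg : ∀ x z, 0 ≤ Θ x z := by
    intro x z
    simp only [hΘ]
    apply mul_nonneg (hsinv_nonneg x)
    apply Finset.sum_nonneg
    intro H hH
    apply mul_nonneg (hFA x H hH)
    split <;> positivity
  have hΘsupp : ∀ x z, Θ x z ≠ 0 → z ∈ gball G x r := by
    intro x z
    contrapose!
    intro hz
    simp only [hΘ]
    rw [Finset.sum_eq_zero, mul_zero]
    intro H hH
    rw [if_neg, mul_zero]
    intro hzH
    exact hz ((hAfacts x H hH).2.2.1 hzH)
  have hΘsum : ∀ x, ∑ᶠ z, Θ x z = 1 := by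
    intro x
    have hsupp : Function.support (Θ x) ⊆ ↑(hball x r).toFinset := by
      intro z hz
      rw [Finset.mem_coe, Set.Finite.mem_toFinset]
      exact hΘsupp x z hz
    rw [finsum_eq_sum_of_support_subset _ hsupp]
    have hstep : ∑ z ∈ (hball x r).toFinset, Θ x z
        = (sf x)⁻¹ * ∑ H ∈ A x, F H *
            (∑ z ∈ (hball x r).toFinset, (if z ∈ H then ((H.ncard : ℝ))⁻¹ else 0)) := by
      simp only [hΘ]
      rw [← Finset.mul_sum, Finset.sum_comm]
      congr 1
      refine Finset.sum_congr rfl fun H _ => ?_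
      rw [← Finset.mul_sum]
    rw [hstep]
    have hone : ∀ H ∈ A x,
        (∑ z ∈ (hball x r).toFinset, (if z ∈ H then ((H.ncard : ℝ))⁻¹ else 0)) = 1 := by
      intro H hH
      obtain ⟨hfin, hx, hsub, hpos, _⟩ := hAfacts x H hH
      exact afp_sum_ite_one H hfin ⟨x, hx⟩ _ (fun z hz => (hball x r).mem_toFinset.mpr (hsub hz))
    rw [Finset.sum_congr rfl fun H hH => by rw [hone H hH, mul_one]]
    rw [hsumA x]
    exact inv_mul_cancel₀ (ne_of_gt (hs_pos x))
  have hΘne : ∀ x, Θ x ≠ 0 := by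
    intro x h0
    have := hΘsum x
    rw [h0] at this
    simp at this
  -- Folner sum bound
  have hFolnerSum : ∀ x, FolnerSum G (Θ x) < ε := by
    intro x
    have hUc : ∀ u, Θ x u ≠ 0 → u ∈ (hball x (r+1)).toFinset := by
      intro u hu
      obtain ⟨h1, h2⟩ := hΘsupp x u hu
      exact (hball x (r+1)).mem_toFinset.mpr ⟨h1, h2.trans (Nat.le_succ r)⟩
    have hUc2 : ∀ u v, Θ x u ≠ 0 → G.Adj u v → v ∈ (hball x (r+1)).toFinset := by
      intro u v hu hadj
      obtain ⟨hreach, hdist⟩ := hΘsupp x u hu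
      obtain ⟨w, hw⟩ := hreach.exists_walk_length_eq_dist
      refine (hball x (r+1)).mem_toFinset.mpr ⟨(w.concat hadj).reachable, ?_⟩
      have := SimpleGraph.dist_le (w.concat hadj)
      rw [SimpleGraph.Walk.length_concat, hw] at this
      omega
    rw [afp_folnerSum_eq hdeg (Θ x) ((hball x (r+1)).toFinset) hUc hUc2]
    set U : Finset V := (hball x (r+1)).toFinset with hUdef
    -- pointwise bound
    have hpt : ∀ u v, |Θ x u - Θ x v| ≤ (sf x)⁻¹ * ∑ H ∈ A x,
        F H * |(if u ∈ H then ((H.ncard : ℝ))⁻¹ else 0) -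
          (if v ∈ H then ((H.ncard : ℝ))⁻¹ else 0)| := by
      intro u v
      have hdiff : Θ x u - Θ x v = (sf x)⁻¹ * ∑ H ∈ A x,
          F H * ((if u ∈ H then ((H.ncard : ℝ))⁻¹ else 0) -
            (if v ∈ H then ((H.ncard : ℝ))⁻¹ else 0)) := by
        simp only [hΘ]
        rw [← mul_sub, ← Finset.sum_sub_distrib]
        congr 1
        refine Finset.sum_congr rfl fun H _ => ?_
        ring
      rw [hdiff, abs_mul, abs_of_nonneg (hsinv_nonneg x)]
      apply mul_le_mul_of_nonneg_left _ (hsinv_nonneg x)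
      refine le_trans (Finset.abs_sum_le_sum_abs _ _) ?_
      apply Finset.sum_le_sum
      intro H hH
      rw [abs_mul, abs_of_nonneg (hFA x H hH)]
    calc ∑ u ∈ U, ∑ v ∈ (hdeg u).1.toFinset, |Θ x u - Θ x v|
        ≤ ∑ u ∈ U, ∑ v ∈ (hdeg u).1.toFinset, ((sf x)⁻¹ * ∑ H ∈ A x,
            F H * |(if u ∈ H then ((H.ncard : ℝ))⁻¹ else 0) -
              (if v ∈ H then ((H.ncard : ℝ))⁻¹ else 0)|) :=
          Finset.sum_le_sum fun u _ => Finset.sum_le_sum fun v _ => hpt u v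
      _ = (sf x)⁻¹ * ∑ H ∈ A x, F H * (∑ u ∈ U, ∑ v ∈ (hdeg u).1.toFinset,
            |(if u ∈ H then ((H.ncard : ℝ))⁻¹ else 0) -
              (if v ∈ H then ((H.ncard : ℝ))⁻¹ else 0)|) :=
          afp_triple_swap U (fun u => (hdeg u).1.toFinset) (A x) F
            (fun H u v => |(if u ∈ H then ((H.ncard : ℝ))⁻¹ else 0) -
              (if v ∈ H then ((H.ncard : ℝ))⁻¹ else 0)|) ((sf x)⁻¹)
      _ < (sf x)⁻¹ * (2 * (d:ℝ) * δ * sf x) := by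
          apply mul_lt_mul_of_pos_left _ (inv_pos.mpr (hs_pos x))
          have hEH : ∀ H ∈ A x, (∑ u ∈ U, ∑ v ∈ (hdeg u).1.toFinset,
              |(if u ∈ H then ((H.ncard : ℝ))⁻¹ else 0) -
                (if v ∈ H then ((H.ncard : ℝ))⁻¹ else 0)|) < 2 * (d:ℝ) * δ := by
            intro H hH
            obtain ⟨hfin, hx, hsub, hpos, hbdy⟩ := hAfacts x H hH
            have hbU : ∀ z ∈ boundary G H, z ∈ U := by
              intro z hz
              obtain ⟨h1, h2⟩ := hsub (afp_boundary_subset H hz)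
              exact (hball x (r+1)).mem_toFinset.mpr ⟨h1, h2.trans (Nat.le_succ r)⟩
            refine lt_of_le_of_lt (afp_E_bound hd hdeg H hfin U hbU) ?_
            have hposR : (0:ℝ) < (H.ncard : ℝ) := by exact_mod_cast hpos
            have hprod : (H.ncard : ℝ)⁻¹ * (2 * (d:ℝ) * ((boundary G H).ncard : ℝ))
                < (H.ncard : ℝ)⁻¹ * (2 * (d:ℝ) * (δ * (H.ncard : ℝ))) := by
              apply mul_lt_mul_of_pos_left _ (inv_pos.mpr hposR)
              apply mul_lt_mul_of_pos_left hbdy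
              have : (0:ℝ) < (d:ℝ) := by exact_mod_cast hd
              linarith
            refine lt_of_lt_of_le hprod (le_of_eq ?_)
            field_simp
          have hle : ∀ H ∈ A x, F H * (∑ u ∈ U, ∑ v ∈ (hdeg u).1.toFinset,
              |(if u ∈ H then ((H.ncard : ℝ))⁻¹ else 0) -
                (if v ∈ H then ((H.ncard : ℝ))⁻¹ else 0)|) ≤ F H * (2 * (d:ℝ) * δ) :=
            fun H hH => mul_le_mul_of_nonneg_left (hEH H hH).le (hFA x H hH)
          have hex : ∃ H ∈ A x, 0 < F H := by
            apply Finset.exists_lt_of_sum_lt (f := fun _ => (0:ℝ))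
            rw [Finset.sum_const, smul_zero, hsumA x]
            exact hs_pos x
          obtain ⟨H0, hH0, hFH0⟩ := hex
          calc ∑ H ∈ A x, F H * (∑ u ∈ U, ∑ v ∈ (hdeg u).1.toFinset,
              |(if u ∈ H then ((H.ncard : ℝ))⁻¹ else 0) -
                (if v ∈ H then ((H.ncard : ℝ))⁻¹ else 0)|)
              < ∑ H ∈ A x, F H * (2 * (d:ℝ) * δ) :=
                Finset.sum_lt_sum hle
                  ⟨H0, hH0, mul_lt_mul_of_pos_left (hEH H0 hH0) hFH0⟩
            _ = 2 * (d:ℝ) * δ * sf x := by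
                rw [← Finset.sum_mul, hsumA x, mul_comm]
      _ = 2 * (d:ℝ) * δ := by
          rw [mul_comm (2 * (d:ℝ) * δ) (sf x), ← mul_assoc,
            inv_mul_cancel₀ (ne_of_gt (hs_pos x)), one_mul]
      _ < ε := h2dδ
  -- adjacency estimate
  have hAdj : ∀ x y, G.Adj x y → (∑ᶠ z, |Θ x z - Θ y z|) < ε := by
    intro x y hxy
    set W : Finset V := (hball x r).toFinset ∪ (hball y r).toFinset with hWdef
    have hsupp : Function.support (fun z => |Θ x z - Θ y z|) ⊆ ↑W := by
      intro z hz
      rw [Function.mem_support] at hz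
      by_contra hzW
      have h1 : Θ x z = 0 := by
        by_contra h
        exact hzW (Finset.mem_coe.mpr (Finset.mem_union_left _
          ((hball x r).mem_toFinset.mpr (hΘsupp x z h))))
      have h2 : Θ y z = 0 := by
        by_contra h
        exact hzW (Finset.mem_coe.mpr (Finset.mem_union_right _
          ((hball y r).mem_toFinset.mpr (hΘsupp y z h))))
      rw [h1, h2] at hz
      simp at hz
    rw [finsum_eq_sum_of_support_subset _ hsupp]
    set C : Finset (Set V) := A x ∪ A y with hCdef
    have hΘC : ∀ (w : V) (zz : V), w = x ∨ w = y → Θ w zz = ∑ H ∈ C,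
        (if H ∈ A w then (sf w)⁻¹ * F H else 0) *
          (if zz ∈ H then ((H.ncard : ℝ))⁻¹ else 0) := by
      intro w zz hw
      have hsubC : A w ⊆ C := by
        rcases hw with h | h <;> rw [h, hCdef]
        · exact Finset.subset_union_left
        · exact Finset.subset_union_right
      have : ∑ H ∈ C, (if H ∈ A w then (sf w)⁻¹ * F H else 0) *
          (if zz ∈ H then ((H.ncard : ℝ))⁻¹ else 0)
          = ∑ H ∈ C, (if H ∈ A w then (sf w)⁻¹ * F H *
              (if zz ∈ H then ((H.ncard : ℝ))⁻¹ else 0) else 0) := by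
        refine Finset.sum_congr rfl fun H _ => ?_
        split <;> simp
      rw [this, Finset.sum_ite_mem, Finset.inter_eq_right.mpr hsubC]
      simp only [hΘ]
      rw [Finset.mul_sum]
      refine Finset.sum_congr rfl fun H _ => by ring
    have hptz : ∀ z, |Θ x z - Θ y z| ≤ ∑ H ∈ C,
        |(if H ∈ A x then (sf x)⁻¹ * F H else 0) - (if H ∈ A y then (sf y)⁻¹ * F H else 0)| *
          (if z ∈ H then ((H.ncard : ℝ))⁻¹ else 0) := by
      intro z
      rw [hΘC x z (Or.inl rfl), hΘC y z (Or.inr rfl), ← Finset.sum_sub_distrib]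
      refine le_trans (Finset.abs_sum_le_sum_abs _ _) (Finset.sum_le_sum fun H _ => ?_)
      rw [← sub_mul, abs_mul]
      apply mul_le_mul_of_nonneg_left _ (abs_nonneg _)
      rw [abs_of_nonneg]
      split <;> positivity
    have hsum1 : ∀ H ∈ C, (∑ z ∈ W, (if z ∈ H then ((H.ncard : ℝ))⁻¹ else 0)) = 1 := by
      intro H hH
      rw [hCdef, Finset.mem_union] at hH
      rcases hH with hH | hH
      · obtain ⟨hfin, hx, hsub, _, _⟩ := hAfacts x H hH
        exact afp_sum_ite_one H hfin ⟨x, hx⟩ _ (fun z hz => Finset.mem_union_left _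
          ((hball x r).mem_toFinset.mpr (hsub hz)))
      · obtain ⟨hfin, hy, hsub, _, _⟩ := hAfacts y H hH
        exact afp_sum_ite_one H hfin ⟨y, hy⟩ _ (fun z hz => Finset.mem_union_right _
          ((hball y r).mem_toFinset.mpr (hsub hz)))
    have hmain : ∑ z ∈ W, |Θ x z - Θ y z| ≤ ∑ H ∈ C,
        |(if H ∈ A x then (sf x)⁻¹ * F H else 0) -
          (if H ∈ A y then (sf y)⁻¹ * F H else 0)| := by
      calc ∑ z ∈ W, |Θ x z - Θ y z|
          ≤ ∑ z ∈ W, ∑ H ∈ C,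
            |(if H ∈ A x then (sf x)⁻¹ * F H else 0) -
              (if H ∈ A y then (sf y)⁻¹ * F H else 0)| *
                (if z ∈ H then ((H.ncard : ℝ))⁻¹ else 0) :=
            Finset.sum_le_sum fun z _ => hptz z
        _ = ∑ H ∈ C, |(if H ∈ A x then (sf x)⁻¹ * F H else 0) -
              (if H ∈ A y then (sf y)⁻¹ * F H else 0)| *
                ∑ z ∈ W, (if z ∈ H then ((H.ncard : ℝ))⁻¹ else 0) := by
            rw [Finset.sum_comm]
            exact Finset.sum_congr rfl fun H _ => (Finset.mul_sum _ _ _).symm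
        _ = ∑ H ∈ C, |(if H ∈ A x then (sf x)⁻¹ * F H else 0) -
              (if H ∈ A y then (sf y)⁻¹ * F H else 0)| := by
            refine Finset.sum_congr rfl fun H hH => ?_
            rw [hsum1 H hH, mul_one]
    -- pointwise bound on the coefficients
    have hinvdiff : |(sf x)⁻¹ - (sf y)⁻¹| ≤ 4 * δ := by
      have hpx := hs_pos x
      have hpy := hs_pos y
      have hid : (sf x)⁻¹ - (sf y)⁻¹ = (sf y - sf x) * ((sf x)⁻¹ * (sf y)⁻¹) := by
        field_simp
      rw [hid, abs_mul]
      have h1 : |sf y - sf x| ≤ δ := by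
        have hcx := (hc x).1
        have hcy := (hc y).1
        have hcx2 := (hc x).2.1
        have hcy2 := (hc y).2.1
        rw [abs_le]
        constructor <;> simp only [hsfdef] <;> linarith
      have h2 : |(sf x)⁻¹ * (sf y)⁻¹| ≤ 4 := by
        rw [abs_mul, abs_of_nonneg (hsinv_nonneg x), abs_of_nonneg (hsinv_nonneg y)]
        calc (sf x)⁻¹ * (sf y)⁻¹ ≤ 2 * 2 :=
              mul_le_mul (hsinv_le2 x) (hsinv_le2 y) (hsinv_nonneg y) (by norm_num)
          _ = 4 := by norm_num
      calc |sf y - sf x| * |(sf x)⁻¹ * (sf y)⁻¹| ≤ δ * 4 :=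
            mul_le_mul h1 h2 (abs_nonneg _) hδ0.le
        _ = 4 * δ := by ring
    have hptH : ∀ H ∈ C, |(if H ∈ A x then (sf x)⁻¹ * F H else 0) -
        (if H ∈ A y then (sf y)⁻¹ * F H else 0)| ≤
          (if H ∈ A x ∧ H ∈ A y then 4 * δ * F H else 0) +
          (if H ∈ A x ∧ H ∉ A y then 2 * F H else 0) +
          (if H ∈ A y ∧ H ∉ A x then 2 * F H else 0) := by
      intro H hH
      have hFpos : 0 ≤ F H := by
        rw [hCdef, Finset.mem_union] at hH
        rcases hH with hH | hH
        · exact hFA x H hH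
        · exact hFA y H hH
      by_cases hax : H ∈ A x <;> by_cases hay : H ∈ A y
      · have e1 : (if H ∈ A x then (sf x)⁻¹ * F H else 0) = (sf x)⁻¹ * F H := if_pos hax
        have e2 : (if H ∈ A y then (sf y)⁻¹ * F H else 0) = (sf y)⁻¹ * F H := if_pos hay
        have e3 : (if H ∈ A x ∧ H ∈ A y then 4 * δ * F H else 0) = 4 * δ * F H :=
          if_pos ⟨hax, hay⟩
        have e4 : (if H ∈ A x ∧ H ∉ A y then 2 * F H else 0) = 0 := if_neg (fun h => h.2 hay)
        have e5 : (if H ∈ A y ∧ H ∉ A x then 2 * F H else 0) = 0 := if_neg (fun h => h.2 hax)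
        rw [e1, e2, e3, e4, e5, add_zero, add_zero]
        have hre : (sf x)⁻¹ * F H - (sf y)⁻¹ * F H = ((sf x)⁻¹ - (sf y)⁻¹) * F H := by ring
        rw [hre, abs_mul, abs_of_nonneg hFpos]
        exact mul_le_mul_of_nonneg_right hinvdiff hFpos
      · have e1 : (if H ∈ A x then (sf x)⁻¹ * F H else 0) = (sf x)⁻¹ * F H := if_pos hax
        have e2 : (if H ∈ A y then (sf y)⁻¹ * F H else 0) = 0 := if_neg hay
        have e3 : (if H ∈ A x ∧ H ∈ A y then 4 * δ * F H else 0) = 0 :=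
          if_neg (fun h => hay h.2)
        have e4 : (if H ∈ A x ∧ H ∉ A y then 2 * F H else 0) = 2 * F H := if_pos ⟨hax, hay⟩
        have e5 : (if H ∈ A y ∧ H ∉ A x then 2 * F H else 0) = 0 := if_neg (fun h => hay h.1)
        rw [e1, e2, e3, e4, e5, sub_zero, zero_add, add_zero]
        rw [abs_of_nonneg (mul_nonneg (hsinv_nonneg x) hFpos)]
        exact mul_le_mul_of_nonneg_right (hsinv_le2 x) hFpos
      · have e1 : (if H ∈ A x then (sf x)⁻¹ * F H else 0) = 0 := if_neg hax
        have e2 : (if H ∈ A y then (sf y)⁻¹ * F H else 0) = (sf y)⁻¹ * F H := if_pos hay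
        have e3 : (if H ∈ A x ∧ H ∈ A y then 4 * δ * F H else 0) = 0 :=
          if_neg (fun h => hax h.1)
        have e4 : (if H ∈ A x ∧ H ∉ A y then 2 * F H else 0) = 0 := if_neg (fun h => hax h.1)
        have e5 : (if H ∈ A y ∧ H ∉ A x then 2 * F H else 0) = 2 * F H := if_pos ⟨hay, hax⟩
        rw [e1, e2, e3, e4, e5, zero_sub, abs_neg, zero_add, zero_add]
        rw [abs_of_nonneg (mul_nonneg (hsinv_nonneg y) hFpos)]
        exact mul_le_mul_of_nonneg_right (hsinv_le2 y) hFpos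
      · exfalso
        rw [hCdef, Finset.mem_union] at hH
        rcases hH with h | h
        · exact hax h
        · exact hay h
    have hS1 : (∑ H ∈ C, if H ∈ A x ∧ H ∈ A y then 4 * δ * F H else 0) ≤ 4 * δ := by
      rw [← Finset.sum_filter]
      have hsub : C.filter (fun H => H ∈ A x ∧ H ∈ A y) ⊆ A x := by
        intro H hH
        exact (Finset.mem_filter.mp hH).2.1
      calc ∑ H ∈ C.filter (fun H => H ∈ A x ∧ H ∈ A y), 4 * δ * F H
          ≤ ∑ H ∈ A x, 4 * δ * F H := by
            apply Finset.sum_le_sum_of_subset_of_nonneg hsub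
            intro H hH _
            exact mul_nonneg (by positivity) (hFA x H hH)
        _ = 4 * δ * sf x := by rw [← Finset.mul_sum, hsumA x]
        _ ≤ 4 * δ := mul_le_of_le_one_right (by positivity) (hs_le1 x)
    have hS2 : (∑ H ∈ C, if H ∈ A x ∧ H ∉ A y then 2 * F H else 0) ≤ 2 * ∑ H ∈ Bf x, F H := by
      rw [← Finset.sum_filter]
      have hsub : C.filter (fun H => H ∈ A x ∧ H ∉ A y) ⊆ Bf x := by
        intro H hH
        obtain ⟨_, hax, hay⟩ := Finset.mem_filter.mp hH
        obtain ⟨hHF, hxH⟩ := (hmemA x H).mp hax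
        have hyH : y ∉ H := fun hy => hay ((hmemA y H).mpr ⟨hHF, hy⟩)
        exact (hmemB x H).mpr ⟨hHF, ⟨hxH, y, ⟨Set.mem_univ y, hyH⟩, hxy⟩⟩
      calc ∑ H ∈ C.filter (fun H => H ∈ A x ∧ H ∉ A y), 2 * F H
          ≤ ∑ H ∈ Bf x, 2 * F H := by
            apply Finset.sum_le_sum_of_subset_of_nonneg hsub
            intro H hH _
            exact mul_nonneg (by norm_num) (hF0 H ((hmemB x H).mp hH).1)
        _ = 2 * ∑ H ∈ Bf x, F H := by rw [← Finset.mul_sum]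
    have hS3 : (∑ H ∈ C, if H ∈ A y ∧ H ∉ A x then 2 * F H else 0) ≤ 2 * ∑ H ∈ Bf y, F H := by
      rw [← Finset.sum_filter]
      have hsub : C.filter (fun H => H ∈ A y ∧ H ∉ A x) ⊆ Bf y := by
        intro H hH
        obtain ⟨_, hay, hax⟩ := Finset.mem_filter.mp hH
        obtain ⟨hHF, hyH⟩ := (hmemA y H).mp hay
        have hxH : x ∉ H := fun hx => hax ((hmemA x H).mpr ⟨hHF, hx⟩)
        exact (hmemB y H).mpr ⟨hHF, ⟨hyH, x, ⟨Set.mem_univ x, hxH⟩, hxy.symm⟩⟩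
      calc ∑ H ∈ C.filter (fun H => H ∈ A y ∧ H ∉ A x), 2 * F H
          ≤ ∑ H ∈ Bf y, 2 * F H := by
            apply Finset.sum_le_sum_of_subset_of_nonneg hsub
            intro H hH _
            exact mul_nonneg (by norm_num) (hF0 H ((hmemB y H).mp hH).1)
        _ = 2 * ∑ H ∈ Bf y, F H := by rw [← Finset.mul_sum]
    have hBx := hsumB x
    have hBy := hsumB y
    calc ∑ z ∈ W, |Θ x z - Θ y z|
        ≤ ∑ H ∈ C, |(if H ∈ A x then (sf x)⁻¹ * F H else 0) -
            (if H ∈ A y then (sf y)⁻¹ * F H else 0)| := hmain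
      _ ≤ ∑ H ∈ C, ((if H ∈ A x ∧ H ∈ A y then 4 * δ * F H else 0) +
            (if H ∈ A x ∧ H ∉ A y then 2 * F H else 0) +
            (if H ∈ A y ∧ H ∉ A x then 2 * F H else 0)) :=
          Finset.sum_le_sum hptH
      _ = (∑ H ∈ C, if H ∈ A x ∧ H ∈ A y then 4 * δ * F H else 0) +
            (∑ H ∈ C, if H ∈ A x ∧ H ∉ A y then 2 * F H else 0) +
            (∑ H ∈ C, if H ∈ A y ∧ H ∉ A x then 2 * F H else 0) := by
          rw [← Finset.sum_add_distrib, ← Finset.sum_add_distrib]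
      _ < ε := by linarith only [hS1, hS2, hS3, hBx, hBy, h8δ]
  -- assemble
  refine ⟨Θ, fun x => ⟨⟨?_, fun z => hΘnonneg x z, hΘne x, ?_⟩, hΘsum x⟩,
    fun x z hz => hΘsupp x z hz, hAdj⟩
  · exact (hball x r).subset (fun z hz => hΘsupp x z hz)
  · rw [hΘsum x, mul_one]
    exact hFolnerSum x

end AFPaper
end

section
/- Let d be a positive integer and let G be a countable graph with all vertex degrees at most d that has subexponential growth. Then for every ε>0 there exists r>0 such that for every vertex x of G there is an i with 1 ≤ i ≤ r satisfying |B_{i+1}(x)| < (1+ε)|B_i(x)|, where B_i(x) denotes the ball of radius i around x. -/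
open scoped ENNReal
open MeasureTheory

namespace AFPaper

lemma gball_finite {V : Type*} {G : SimpleGraph V} {d : ℕ} (hdeg : DegLE G d)
    (x : V) : ∀ r : ℕ, (gball G x r).Finite := by
  intro r
  induction r with
  | zero =>
    apply Set.Finite.subset (Set.finite_singleton x)
    rintro y ⟨hre, hdist⟩
    have h0 : G.dist x y = 0 := Nat.le_zero.mp hdist
    have hxy : x = y := (hre.dist_eq_zero_iff).mp h0
    simp [hxy]
  | succ n ih =>
    have hsub : gball G x (n+1) ⊆ gball G x n ∪ ⋃ y ∈ gball G x n, G.neighborSet y := by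
      rintro z ⟨hre, hdist⟩
      obtain ⟨p, hp⟩ := (hre.symm).exists_walk_length_eq_dist
      cases p with
      | nil => exact Or.inl ⟨SimpleGraph.Reachable.refl x, by simp [SimpleGraph.dist_self]⟩
      | @cons _ w _ h q =>
        right
        refine Set.mem_biUnion (show w ∈ gball G x n from ?_) h.symm
        refine ⟨q.reverse.reachable, ?_⟩
        have hlen : q.length + 1 = G.dist z x := hp
        have hd2 : G.dist z x ≤ n + 1 := by rwa [SimpleGraph.dist_comm] at hdist
        have : G.dist w x ≤ q.length := SimpleGraph.dist_le q
        rw [SimpleGraph.dist_comm]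
        omega
    exact Set.Finite.subset (ih.union (Set.Finite.biUnion ih fun y _ => (hdeg y).1)) hsub

/-- in a graph of subexponential growth, balls of slow growth occur
within any bounded window of radii, uniformly in the center. -/
theorem subexp_ball_ratio (d : ℕ) (hd : 0 < d) {V : Type} [Countable V]
    (G : SimpleGraph V) (hdeg : DegLE G d) (hsub : SubexpGrowth G) :
    ∀ ε : ℝ, 0 < ε → ∃ r : ℕ, 0 < r ∧ ∀ x : V, ∃ i : ℕ, 1 ≤ i ∧ i ≤ r ∧
      ((gball G x (i + 1)).ncard : ℝ) < (1 + ε) * ((gball G x i).ncard : ℝ) := by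
  intro ε hε
  set L := Real.log (1 + ε) with hLdef
  have hL : 0 < L := Real.log_pos (by linarith)
  obtain ⟨R, hR⟩ := hsub (L / 2) (by linarith)
  refine ⟨max R 2, lt_of_lt_of_le (by norm_num) (le_max_right R 2), ?_⟩
  intro x
  by_contra hcon
  push_neg at hcon
  set r := max R 2 with hrdef
  have hfin : ∀ i, (gball G x i).Finite := gball_finite hdeg x
  have key : ∀ i, i ≤ r → (1 + ε) ^ i ≤ ((gball G x (i+1)).ncard : ℝ) := by
    intro i
    induction i with
    | zero =>
      intro _
      have hx : x ∈ gball G x 1 := ⟨SimpleGraph.Reachable.refl x, by simp [SimpleGraph.dist_self]⟩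
      have h1 : 0 < (gball G x 1).ncard := (Set.ncard_pos (hfin 1)).mpr ⟨x, hx⟩
      simpa using (by exact_mod_cast h1 : (1:ℝ) ≤ ((gball G x 1).ncard : ℝ))
    | succ n ih =>
      intro hi
      have h1 := hcon (n+1) (by omega) (by omega)
      have h2 := ih (by omega)
      have h3 : (1+ε)^(n+1) = (1+ε) * (1+ε)^n := by ring
      rw [h3]
      calc (1+ε) * (1+ε)^n ≤ (1+ε) * ((gball G x (n+1)).ncard : ℝ) := by nlinarith
        _ ≤ ((gball G x (n+2)).ncard : ℝ) := h1
  have hkr := key r le_rfl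
  have hlog := hR (r+1) (by omega) x
  have hmono : (r : ℝ) * L ≤ Real.log ((gball G x (r+1)).ncard : ℝ) := by
    rw [hLdef, ← Real.log_pow]
    exact Real.log_le_log (by positivity) hkr
  have hr2 : (2:ℝ) ≤ (r:ℝ) := by exact_mod_cast le_max_right R 2
  push_cast at hlog
  nlinarith

end AFPaper
end

section
/- Let Γ be a finitely generated amenable group with a finite symmetric generating set Σ. For every ε>0 there exists δ>0 such that for every subgroup H ⊆ Γ and every δ-Følner set Q in the Cayley graph Cay(Γ,Σ), there exists a subset J ⊆ Q with |J| < ε|Q| such that the image π_H(Q∖J) under the quotient map π_H : Γ → Γ/H, π_H(x) = Hx, is an ε-Følner set in the Schreier graph Sch(Γ/H, Σ). -/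
open scoped ENNReal
open MeasureTheory

namespace AFPaper

/-- The Cayley graph of `Γ` with respect to the (symmetric) generating set `S`. -/
def cayleyGraph (Γ : Type*) [Group Γ] (S : Finset Γ) : SimpleGraph Γ where
  Adj x y := x ≠ y ∧ ∃ σ ∈ S, y = x * σ ∨ x = y * σ
  symm := by
    constructor
    rintro x y ⟨hne, σ, hσ, hor⟩
    exact ⟨hne.symm, σ, hσ, hor.symm⟩
  loopless := by
    constructor
    rintro x ⟨hne, -⟩
    exact hne rfl

/-- The Schreier graph on the right cosets of `H` in `Γ`, with respect to the
(symmetric) generating set `S`: `Ha` is adjacent to `Hb ≠ Ha` iff `Hb = Haσ` for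
some `σ ∈ S` (the condition is symmetrized, which is no change for symmetric `S`). -/
def schreierGraph (Γ : Type*) [Group Γ] (S : Finset Γ) (H : Subgroup Γ) :
    SimpleGraph (Quotient (QuotientGroup.rightRel H)) where
  Adj a b := a ≠ b ∧ ∃ σ ∈ S,
    ((∃ x : Γ, Quotient.mk (QuotientGroup.rightRel H) x = a ∧
        Quotient.mk (QuotientGroup.rightRel H) (x * σ) = b) ∨
      (∃ x : Γ, Quotient.mk (QuotientGroup.rightRel H) x = b ∧
        Quotient.mk (QuotientGroup.rightRel H) (x * σ) = a))
  symm := by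
    constructor
    rintro a b ⟨hne, σ, hσ, hor⟩
    exact ⟨hne.symm, σ, hσ, hor.symm⟩
  loopless := by
    constructor
    rintro a ⟨hne, -⟩
    exact hne rfl

/-- `Γ` is amenable (Følner condition) with respect to the generating set `S`:
for every `ε > 0` there is a finite set `F` with `|F △ σF| < ε|F|` for all `σ ∈ S`. -/
def GroupFolner (Γ : Type*) [Group Γ] (S : Finset Γ) : Prop :=
  ∀ ε : ℝ, 0 < ε → ∃ F : Finset Γ, F.Nonempty ∧
    ∀ σ ∈ S, ((symmDiff (F : Set Γ) ((fun x => σ * x) '' (F : Set Γ))).ncard : ℝ)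
      < ε * (F.card : ℝ)

end AFPaper

/-!
Let `w(c) = |Q ∩ c|` count the points of `Q` in the coset `c`. Right multiplication by
`σ ∈ S ∪ S⁻¹` maps `Q ∩ c` into `cσ` except for Cayley-boundary points of `Q`, so
`w(c) - w(cσ) ≤ |∂Q ∩ c|`. Co-area: the boundaries of the level sets `{w > t}`, `t < T`,
have total size at most `|S ∪ S⁻¹| |∂Q| < ε² |Q|`, while their sizes add up to
`∑ min(w, T)`. For the first `T` with `∑ min(w, T) ≥ ε |Q|` some level `t < T` is therefore
`ε`-Følner; it is the image of `Q \ J` for `J = {q ∈ Q | w(Hq) ≤ t}`, and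
`|J| ≤ ∑ min(w, t) < ε |Q|`.
-/

open Finset Function
open scoped Pointwise

namespace AFPaper

section Coarea

variable {α W : Type*} (P : Finset W) (w : W → ℕ)

theorem sum_range_card_filter_lt (T : ℕ) :
    ∑ t ∈ range T, #{c ∈ P | t < w c} = ∑ c ∈ P, min (w c) T := by
  simp only [card_filter]
  rw [sum_comm]
  refine sum_congr rfl fun c _ => ?_
  rw [← card_filter, ← card_range (min (w c) T)]
  congr 1
  ext t
  simp only [mem_filter, mem_range, lt_min_iff]
  tauto

theorem sum_range_card_filter_le_lt_le_sum_tsub (v : W → ℕ) (T : ℕ) :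
    ∑ t ∈ range T, #{c ∈ P | v c ≤ t ∧ t < w c} ≤ ∑ c ∈ P, (w c - v c) := by
  simp only [card_filter]
  rw [sum_comm]
  refine sum_le_sum fun c _ => ?_
  rw [← card_filter, ← Nat.card_Ico]
  exact card_le_card fun t ht => mem_Ico.mpr (mem_filter.mp ht).2

theorem sum_range_card_filter_exists_le_le (b : W → ℕ) (ι : Finset α) (m : α → W → W)
    (hb : ∀ i ∈ ι, ∀ c ∈ P, w c ≤ b c + w (m i c)) (T : ℕ) :
    ∑ t ∈ range T, #{c ∈ P | t < w c ∧ ∃ i ∈ ι, w (m i c) ≤ t} ≤ #ι * ∑ c ∈ P, b c := by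
  classical
  calc _ ≤ ∑ t ∈ range T, ∑ i ∈ ι, #{c ∈ P | w (m i c) ≤ t ∧ t < w c} := by
        refine sum_le_sum fun t _ => (card_le_card fun c hc => ?_).trans card_biUnion_le
        obtain ⟨hcP, hct, i, hi, hit⟩ := mem_filter.mp hc
        exact mem_biUnion.mpr ⟨i, hi, mem_filter.mpr ⟨hcP, hit, hct⟩⟩
    _ = ∑ i ∈ ι, ∑ t ∈ range T, #{c ∈ P | w (m i c) ≤ t ∧ t < w c} := sum_comm
    _ ≤ ∑ i ∈ ι, ∑ c ∈ P, (w c - w (m i c)) :=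
        sum_le_sum fun i _ => sum_range_card_filter_le_lt_le_sum_tsub P w (w ∘ m i) T
    _ ≤ ∑ i ∈ ι, ∑ c ∈ P, b c :=
        sum_le_sum fun i hi => sum_le_sum fun c hc => by have := hb i hi c hc; omega
    _ = #ι * ∑ c ∈ P, b c := by rw [sum_const, smul_eq_mul]

theorem exists_level_card_filter_lt (b : W → ℕ) (ι : Finset α) (m : α → W → W)
    (hb : ∀ i ∈ ι, ∀ c ∈ P, w c ≤ b c + w (m i c)) {ε : ℝ} (hε : 0 < ε) (hε1 : ε ≤ 1)
    (hsmall : (#ι * ∑ c ∈ P, b c : ℝ) < ε ^ 2 * ∑ c ∈ P, w c) :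
    ∃ t, ((∑ c ∈ P, min (w c) t : ℕ) : ℝ) < ε * (∑ c ∈ P, w c : ℕ) ∧
      (#{c ∈ P | t < w c ∧ ∃ i ∈ ι, w (m i c) ≤ t} : ℝ) < ε * #{c ∈ P | t < w c} := by
  have hex : ∃ T, ε * (∑ c ∈ P, w c : ℕ) ≤ ((∑ c ∈ P, min (w c) T : ℕ) : ℝ) := by
    refine ⟨∑ c ∈ P, w c, ?_⟩
    rw [sum_congr rfl fun c hc => min_eq_left (single_le_sum (fun _ _ => Nat.zero_le _) hc)]
    exact mul_le_of_le_one_left (Nat.cast_nonneg _) hε1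
  classical
  set T := Nat.find hex
  have hlevels : ∑ t ∈ range T, (#{c ∈ P | t < w c ∧ ∃ i ∈ ι, w (m i c) ≤ t} : ℝ)
      < ∑ t ∈ range T, ε * #{c ∈ P | t < w c} := by
    have hT : ε * (∑ c ∈ P, w c : ℕ) ≤ ((∑ c ∈ P, min (w c) T : ℕ) : ℝ) := Nat.find_spec hex
    rw [← mul_sum]
    calc _ ≤ (#ι * ∑ c ∈ P, b c : ℝ) := by
          exact_mod_cast sum_range_card_filter_exists_le_le P w b ι m hb T
      _ < ε * (ε * ∑ c ∈ P, w c) := by rw [← mul_assoc, ← sq]; exact hsmall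
      _ ≤ ε * ∑ t ∈ range T, (#{c ∈ P | t < w c} : ℝ) := by
        gcongr
        exact_mod_cast (sum_range_card_filter_lt P w T).symm ▸ hT
  obtain ⟨t, ht, hlevel⟩ := exists_lt_of_sum_lt hlevels
  exact ⟨t, lt_of_not_ge (Nat.find_min hex (mem_range.mp ht)), hlevel⟩

end Coarea

section Fibers

variable {α V W : Type*} [DecidableEq W]

def moveBoundary (ι : Finset α) (m : α → W → W) (F : Finset W) : Finset W :=
  {c ∈ F | ∃ i ∈ ι, m i c ∉ F}

theorem moveBoundary_subset (ι : Finset α) (m : α → W → W) (F : Finset W) :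
    moveBoundary ι m F ⊆ F :=
  filter_subset _ _

def fiberCard (π : V → W) (Q : Finset V) (c : W) : ℕ :=
  #{q ∈ Q | π q = c}

variable {π : V → W} {Q : Finset V}

theorem fiberCard_eq_zero_of_notMem_image {c : W} (hc : c ∉ Q.image π) :
    fiberCard π Q c = 0 :=
  card_eq_zero.mpr <| filter_eq_empty_iff.mpr fun _ hq hqc => hc (hqc ▸ mem_image_of_mem π hq)

theorem sum_fiberCard_of_subset {B : Finset V} (hB : B ⊆ Q) :
    ∑ c ∈ Q.image π, fiberCard π B c = #B :=
  (card_eq_sum_card_fiberwise fun _ hq => mem_image_of_mem π (hB hq)).symm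

theorem fiberCard_le_add [DecidableEq V] {g : V → V} (hg : Injective g) {m : W → W}
    (hπ : ∀ v, π (g v) = m (π v)) {B : Finset V} (hB : ∀ q ∈ Q, g q ∉ Q → q ∈ B) (c : W) :
    fiberCard π Q c ≤ fiberCard π B c + fiberCard π Q (m c) := by
  unfold fiberCard
  rw [← card_filter_add_card_filter_not (fun q => g q ∈ Q), add_comm]
  refine add_le_add (card_le_card fun q hq => ?_)
    (card_le_card_of_injOn g (fun q hq => ?_) hg.injOn)
  · rw [mem_filter, mem_filter] at hq
    obtain ⟨⟨hqQ, hqc⟩, hgq⟩ := hq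
    exact mem_filter.mpr ⟨hB q hqQ hgq, hqc⟩
  · rw [mem_coe, mem_filter, mem_filter] at hq
    obtain ⟨⟨-, hqc⟩, hgq⟩ := hq
    exact mem_filter.mpr ⟨hgq, by rw [hπ, hqc]⟩

theorem image_sdiff_filter_fiberCard_le [DecidableEq V] (t : ℕ) :
    (Q \ {q ∈ Q | fiberCard π Q (π q) ≤ t}).image π = {c ∈ Q.image π | t < fiberCard π Q c} := by
  ext c
  simp only [mem_image, mem_filter, mem_sdiff, not_and, not_le]
  constructor
  · rintro ⟨q, ⟨hqQ, hqt⟩, rfl⟩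
    exact ⟨⟨q, hqQ, rfl⟩, hqt hqQ⟩
  · rintro ⟨⟨q, hqQ, rfl⟩, hqt⟩
    exact ⟨q, ⟨hqQ, fun _ => hqt⟩, rfl⟩

theorem card_filter_fiberCard_le_le_sum_min (t : ℕ) :
    #{q ∈ Q | fiberCard π Q (π q) ≤ t} ≤ ∑ c ∈ Q.image π, min (fiberCard π Q c) t := by
  rw [card_eq_sum_card_fiberwise fun q hq => mem_image_of_mem π (filter_subset _ Q hq)]
  refine sum_le_sum fun c _ => ?_
  have hsub : {q ∈ {q ∈ Q | fiberCard π Q (π q) ≤ t} | π q = c} ⊆ {q ∈ Q | π q = c} :=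
    fun q hq => by simp only [mem_filter] at hq ⊢; exact ⟨hq.1.1, hq.2⟩
  rcases eq_empty_or_nonempty {q ∈ {q ∈ Q | fiberCard π Q (π q) ≤ t} | π q = c} with h | ⟨q, hq⟩
  · rw [h, card_empty]
    exact Nat.zero_le _
  · simp only [mem_filter] at hq
    obtain ⟨⟨-, hqt⟩, rfl⟩ := hq
    exact le_min (card_le_card hsub) ((card_le_card hsub).trans hqt)

theorem exists_subset_card_moveBoundary_image_sdiff_lt [DecidableEq V] (π : V → W) (ι : Finset α)
    (g : α → V → V) (hg : ∀ i, Injective (g i)) (m : α → W → W)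
    (hπ : ∀ i v, π (g i v) = m i (π v)) (Q : Finset V) {ε : ℝ} (hε : 0 < ε) (hε1 : ε ≤ 1)
    (hsmall : (#ι * #(moveBoundary ι g Q) : ℝ) < ε ^ 2 * #Q) :
    ∃ J ⊆ Q, (#J : ℝ) < ε * #Q ∧
      (#(moveBoundary ι m ((Q \ J).image π)) : ℝ) < ε * #((Q \ J).image π) := by
  set w := fiberCard π Q
  have hsumw : ∑ c ∈ Q.image π, w c = #Q := sum_fiberCard_of_subset subset_rfl
  obtain ⟨t, hJ, hlevel⟩ := exists_level_card_filter_lt (Q.image π) w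
    (fiberCard π (moveBoundary ι g Q)) ι m
    (fun i hi c _ => fiberCard_le_add (hg i) (hπ i)
      (fun q hq hgq => mem_filter.mpr ⟨hq, i, hi, hgq⟩) c) hε hε1
    (by rwa [hsumw, sum_fiberCard_of_subset (moveBoundary_subset ι g Q)])
  refine ⟨{q ∈ Q | w (π q) ≤ t}, filter_subset _ Q, ?_, ?_⟩
  · rw [← hsumw]
    exact lt_of_le_of_lt (Nat.cast_le.mpr (card_filter_fiberCard_le_le_sum_min t)) hJ
  · rw [image_sdiff_filter_fiberCard_le]
    have hsub : moveBoundary ι m {c ∈ Q.image π | t < w c}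
        ⊆ {c ∈ Q.image π | t < w c ∧ ∃ i ∈ ι, w (m i c) ≤ t} := by
      intro c hc
      obtain ⟨hcF, i, hi, hmc⟩ := mem_filter.mp hc
      obtain ⟨hcP, hct⟩ := mem_filter.mp hcF
      refine mem_filter.mpr ⟨hcP, hct, i, hi, not_lt.mp fun hlt => hmc (mem_filter.mpr ⟨?_, hlt⟩)⟩
      by_contra hnot
      simp only [w, fiberCard_eq_zero_of_notMem_image hnot, Nat.not_lt_zero] at hlt
    exact lt_of_le_of_lt (Nat.cast_le.mpr (card_le_card hsub)) hlevel

end Fibers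

section Schreier

variable {Γ : Type*} [Group Γ]

def rightCosetMul (H : Subgroup Γ) (σ : Γ) :
    Quotient (QuotientGroup.rightRel H) → Quotient (QuotientGroup.rightRel H) :=
  Quotient.map (· * σ) fun _ _ hab => QuotientGroup.rightRel_apply.mpr <| by
    simpa [mul_assoc] using QuotientGroup.rightRel_apply.mp hab

theorem rightCosetMul_mk (H : Subgroup Γ) (σ x : Γ) :
    rightCosetMul H σ (Quotient.mk _ x) = Quotient.mk (QuotientGroup.rightRel H) (x * σ) :=
  rfl

theorem exists_eq_rightCosetMul_of_adj [DecidableEq Γ] {S : Finset Γ} {H : Subgroup Γ}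
    {c d : Quotient (QuotientGroup.rightRel H)} (h : (schreierGraph Γ S H).Adj c d) :
    ∃ σ ∈ S ∪ S⁻¹, d = rightCosetMul H σ c := by
  obtain ⟨-, σ, hσ, ⟨x, rfl, rfl⟩ | ⟨x, rfl, rfl⟩⟩ := h
  · exact ⟨σ, mem_union_left _ hσ, rfl⟩
  · refine ⟨σ⁻¹, mem_union_right _ (inv_mem_inv hσ), ?_⟩
    rw [rightCosetMul_mk, mul_inv_cancel_right]

theorem coe_moveBoundary_subset_boundary_cayleyGraph [DecidableEq Γ] (S Q : Finset Γ) :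
    (moveBoundary (S ∪ S⁻¹) (fun σ x => x * σ) Q : Set Γ) ⊆ boundary (cayleyGraph Γ S) Q := by
  intro q hq
  obtain ⟨hqQ, σ, hσ, hqσ : q * σ ∉ Q⟩ := mem_filter.mp hq
  refine ⟨hqQ, q * σ, ⟨Set.mem_univ _, hqσ⟩, fun h => hqσ (h ▸ hqQ), ?_⟩
  rcases mem_union.mp hσ with hσ | hσ
  · exact ⟨σ, hσ, Or.inl rfl⟩
  · exact ⟨σ⁻¹, mem_inv'.mp hσ, Or.inr (mul_inv_cancel_right q σ).symm⟩

theorem boundary_schreierGraph_subset_moveBoundary [DecidableEq Γ] (S : Finset Γ)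
    (H : Subgroup Γ) [DecidableEq (Quotient (QuotientGroup.rightRel H))]
    (F : Finset (Quotient (QuotientGroup.rightRel H))) :
    boundary (schreierGraph Γ S H) F ⊆ (moveBoundary (S ∪ S⁻¹) (rightCosetMul H) F : Set _) := by
  rintro c ⟨hcF, d, ⟨-, hdF⟩, hcd⟩
  obtain ⟨σ, hσ, rfl⟩ := exists_eq_rightCosetMul_of_adj hcd
  exact mem_filter.mpr ⟨hcF, σ, hσ, hdF⟩

theorem card_moveBoundary_lt_of_isFolner [DecidableEq Γ] {S Q : Finset Γ} {δ : ℝ}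
    (hQ : IsFolner (cayleyGraph Γ S) δ Q) :
    (#(moveBoundary (S ∪ S⁻¹) (fun σ x => x * σ) Q) : ℝ) < δ * #Q := by
  rw [← Set.ncard_coe_finset Q, ← Set.ncard_coe_finset]
  refine lt_of_le_of_lt (Nat.cast_le.mpr ?_) hQ.2
  exact Set.ncard_le_ncard (coe_moveBoundary_subset_boundary_cayleyGraph S Q)
    (Q.finite_toSet.subset fun _ hq => hq.1)

theorem isFolner_schreierGraph_of_card_moveBoundary_lt [DecidableEq Γ] {S : Finset Γ}
    {H : Subgroup Γ} [DecidableEq (Quotient (QuotientGroup.rightRel H))]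
    {F : Finset (Quotient (QuotientGroup.rightRel H))} {ε : ℝ}
    (hF : (#(moveBoundary (S ∪ S⁻¹) (rightCosetMul H) F) : ℝ) < ε * #F) :
    IsFolner (schreierGraph Γ S H) ε F := by
  refine ⟨F.finite_toSet, ?_⟩
  rw [Set.ncard_coe_finset]
  refine lt_of_le_of_lt (Nat.cast_le.mpr ?_) hF
  rw [← Set.ncard_coe_finset]
  exact Set.ncard_le_ncard (boundary_schreierGraph_subset_moveBoundary S H F)

end Schreier

theorem folner_image_in_schreier_general
    (Γ : Type) [Group Γ] (S : Finset Γ) :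
    ∀ ε : ℝ, 0 < ε → ∃ δ : ℝ, 0 < δ ∧
      ∀ (H : Subgroup Γ) (Q : Set Γ), IsFolner (cayleyGraph Γ S) δ Q →
        ∃ J : Set Γ, J ⊆ Q ∧ ((J.ncard : ℝ) < ε * (Q.ncard : ℝ)) ∧
          IsFolner (schreierGraph Γ S H) ε
            ((fun x => Quotient.mk (QuotientGroup.rightRel H) x) '' (Q \ J)) := by
  classical
  intro ε hε
  set ε₀ := min ε 1
  have hε₀ : 0 < ε₀ := lt_min hε one_pos
  set k : ℕ := #(S ∪ S⁻¹)
  refine ⟨ε₀ ^ 2 / (k + 1), by positivity, fun H Q hQ => ?_⟩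
  lift Q to Finset Γ using hQ.1
  have hB := card_moveBoundary_lt_of_isFolner hQ
  have hsmall : (k * #(moveBoundary (S ∪ S⁻¹) (fun σ x => x * σ) Q) : ℝ) < ε₀ ^ 2 * #Q := by
    have hQpos : (0 : ℝ) < #Q :=
      pos_of_mul_pos_right ((Nat.cast_nonneg _).trans_lt hB) (by positivity)
    calc _ ≤ k * (ε₀ ^ 2 / (k + 1) * #Q) := by gcongr
      _ < ε₀ ^ 2 * #Q := by
        rw [← mul_assoc, mul_div_assoc', div_mul_eq_mul_div, div_lt_iff₀ (by positivity)]
        nlinarith [sq_pos_of_pos hε₀]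
  obtain ⟨J, hJQ, hJ, hbd⟩ := exists_subset_card_moveBoundary_image_sdiff_lt (Quotient.mk _)
    (S ∪ S⁻¹) (fun σ x => x * σ) mul_left_injective (rightCosetMul H) (fun _ _ => rfl) Q hε₀
    (min_le_right _ _) hsmall
  refine ⟨J, coe_subset.mpr hJQ, ?_, ?_⟩
  · rw [Set.ncard_coe_finset, Set.ncard_coe_finset]
    exact hJ.trans_le (by gcongr; exact min_le_left _ _)
  · rw [← coe_sdiff, ← coe_image]
    exact isFolner_schreierGraph_of_card_moveBoundary_lt
      (hbd.trans_le (by gcongr; exact min_le_left _ _))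

/-- after removing a small set `J`, the image of a δ-Følner set of the
Cayley graph under the quotient map is an ε-Følner set of the Schreier graph. -/
theorem folner_image_in_schreier
    (Γ : Type) [Group Γ] (S : Finset Γ)
    (hsym : ∀ σ ∈ S, σ⁻¹ ∈ S)
    (hgen : Subgroup.closure (S : Set Γ) = ⊤)
    (hamen : GroupFolner Γ S) :
    ∀ ε : ℝ, 0 < ε → ∃ δ : ℝ, 0 < δ ∧
      ∀ (H : Subgroup Γ) (Q : Set Γ), IsFolner (cayleyGraph Γ S) δ Q →
        ∃ J : Set Γ, J ⊆ Q ∧ ((J.ncard : ℝ) < ε * (Q.ncard : ℝ)) ∧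
          IsFolner (schreierGraph Γ S H) ε
            ((fun x => Quotient.mk (QuotientGroup.rightRel H) x) '' (Q \ J)) :=
  folner_image_in_schreier_general Γ S

end AFPaper
end
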